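/- arXiv:2010.06331 — 5 statements merged into one kernel-verified Lean document; each statement's English description precedes it below -/
import Mathlib

section
/- If M, D, K ∈ ℝ^{n×n} are symmetric positive definite with D M⁻¹ K = K M⁻¹ D (modal damping), then there exists an invertible matrix X ∈ ℝ^{n×n} and diagonal matrices Ω > 0 and Ξ such that Xᵀ M X = Ω⁻¹, Xᵀ K X = Ω, and Xᵀ D X = 2Ξ. -/
/-!
Congruence by any `Y` with `Yᴴ M Y = 1` turns `K` and `D` into Hermitian matrices whose product
is `Yᴴ K M⁻¹ D Y`, because `Y Yᴴ = M⁻¹`; so modal damping says exactly that they commute.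
Commuting Hermitian matrices are diagonalized by one unitary `U` (an orthonormal basis of joint
eigenvectors), so `X₀ = Y U` brings `M, K, D` to `1, diag μ, diag δ` with `μ > 0`. Rescaling the
columns of `X₀` by `μ^(-1/4)` then yields `Ω⁻¹, Ω, 2Ξ` with `Ω = diag √μ`.
-/

open Module

namespace DirectSum.IsInternal

variable {𝕜 E ι κ : Type*} [RCLike 𝕜] [NormedAddCommGroup E] [InnerProductSpace 𝕜 E]
  [FiniteDimensional 𝕜 E] [DecidableEq ι] [Fintype κ] {V : ι → Submodule 𝕜 E}

/- Unlike `subordinateOrthonormalBasis`, this allows an infinite index type `ι`: only the finitely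
many nonzero summands are used. -/
theorem exists_orthonormalBasis_subordinate (hV : IsInternal V)
    (hV' : OrthogonalFamily 𝕜 (fun i => V i) fun i => (V i).subtypeₗᵢ)
    (hκ : finrank 𝕜 E = Fintype.card κ) :
    ∃ (b : OrthonormalBasis κ 𝕜 E) (σ : κ → ι), ∀ k, b k ∈ V (σ k) := by
  let W : {i // V i ≠ ⊥} → Submodule 𝕜 E := fun i => V i
  have hW : IsInternal W := isInternal_ne_bot_iff.mpr hV
  have hW' : OrthogonalFamily 𝕜 (fun i => W i) fun i => (W i).subtypeₗᵢ :=
    hV'.comp Subtype.coe_injective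
  have : Fintype {i // V i ≠ ⊥} := hV.submodule_iSupIndep.fintypeNeBotOfFiniteDimensional
  let e := Fintype.equivFin κ
  refine ⟨(hW.subordinateOrthonormalBasis hκ hW').reindex e.symm,
    fun k => (hW.subordinateOrthonormalBasisIndex hκ (e k) hW' : {i // V i ≠ ⊥}), fun k => ?_⟩
  rw [OrthonormalBasis.reindex_apply, Equiv.symm_symm]
  exact hW.subordinateOrthonormalBasis_subordinate hκ (e k) hW'

end DirectSum.IsInternal

namespace LinearMap.IsSymmetric

variable {𝕜 E κ : Type*} [RCLike 𝕜] [NormedAddCommGroup E] [InnerProductSpace 𝕜 E]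
  [FiniteDimensional 𝕜 E] [Fintype κ] {A B : E →ₗ[𝕜] E}

theorem exists_orthonormalBasis_eigenvectors_of_commute (hA : A.IsSymmetric)
    (hB : B.IsSymmetric) (hAB : Commute A B) (hκ : finrank 𝕜 E = Fintype.card κ) :
    ∃ (b : OrthonormalBasis κ 𝕜 E) (μ δ : κ → 𝕜),
      ∀ k, A (b k) = μ k • b k ∧ B (b k) = δ k • b k := by
  classical
  obtain ⟨b, σ, hb⟩ :=
    (hA.directSum_isInternal_of_commute hB hAB).exists_orthonormalBasis_subordinate
      (hA.orthogonalFamily_eigenspace_inf_eigenspace hB) hκ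
  exact ⟨b, fun k => (σ k).2, fun k => (σ k).1, fun k =>
    ⟨Module.End.mem_eigenspace_iff.mp (hb k).1, Module.End.mem_eigenspace_iff.mp (hb k).2⟩⟩

end LinearMap.IsSymmetric

namespace Matrix

theorem conjTranspose_mul_mul_same_mul {α l m n : Type*} [NonUnitalCommSemiring α] [StarRing α]
    [Fintype l] [Fintype m] (P : Matrix l l α) (Y : Matrix l m α) (U : Matrix m n α) :
    (Y * U)ᴴ * P * (Y * U) = Uᴴ * (Yᴴ * P * Y) * U := by
  simp only [conjTranspose_mul, Matrix.mul_assoc]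

theorem mul_eq_mul_diagonal_of_mulVec_col {α m n : Type*} [CommSemiring α] [Fintype m] [Fintype n]
    [DecidableEq n] {A : Matrix m m α} {U : Matrix m n α} {μ : n → α}
    (h : ∀ j, A *ᵥ col U j = μ j • col U j) : A * U = U * diagonal μ := by
  ext i j
  rw [mul_diagonal]
  simpa [mulVec, dotProduct, mul_apply, mul_comm] using congrFun (h j) i

variable {𝕜 ι : Type*} [RCLike 𝕜] [Fintype ι] [DecidableEq ι]

theorem IsHermitian.exists_unitary_star_mul_mul_eq_diagonal_of_commute {A B : Matrix ι ι 𝕜}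
    (hA : A.IsHermitian) (hB : B.IsHermitian) (hAB : Commute A B) :
    ∃ U ∈ unitaryGroup ι 𝕜, ∃ μ δ : ι → 𝕜,
      star U * A * U = diagonal μ ∧ star U * B * U = diagonal δ := by
  obtain ⟨b, μ, δ, hb⟩ :=
    (isSymmetric_toEuclideanLin_iff.mpr hA).exists_orthonormalBasis_eigenvectors_of_commute
      (isSymmetric_toEuclideanLin_iff.mpr hB) (hAB.map (toLpLinAlgEquiv 2)) finrank_euclideanSpace
  let U := (EuclideanSpace.basisFun ι 𝕜).toBasis.toMatrix b.toBasis
  have hU : U ∈ unitaryGroup ι 𝕜 :=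
    (EuclideanSpace.basisFun ι 𝕜).toMatrix_orthonormalBasis_mem_unitary b
  have hcol : ∀ j, col U j = b j := fun j => rfl
  have hdiag : ∀ (C : Matrix ι ι 𝕜) (ν : ι → 𝕜), (∀ j, toEuclideanLin C (b j) = ν j • b j) →
      star U * C * U = diagonal ν := fun C ν h => by
    have hCU : C * U = U * diagonal ν := mul_eq_mul_diagonal_of_mulVec_col (U := U) fun j => by
      simpa [hcol] using congrArg WithLp.ofLp (h j)
    rw [Matrix.mul_assoc, hCU, ← Matrix.mul_assoc, (mem_unitaryGroup_iff').mp hU, Matrix.one_mul]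
  exact ⟨U, hU, μ, δ, hdiag A μ fun j => (hb j).1, hdiag B δ fun j => (hb j).2⟩

open scoped MatrixOrder ComplexOrder

theorem PosDef.exists_isUnit_conjTranspose_mul_mul_eq_one {M : Matrix ι ι 𝕜} (hM : M.PosDef) :
    ∃ Y : Matrix ι ι 𝕜, IsUnit Y ∧ Yᴴ * M * Y = 1 := by
  obtain ⟨B, hB, rfl⟩ := CStarAlgebra.isStrictlyPositive_iff_eq_star_mul_self.mp
    hM.isStrictlyPositive
  lift B to (Matrix ι ι 𝕜)ˣ using hB
  refine ⟨↑B⁻¹, Units.isUnit _, ?_⟩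
  rw [← star_eq_conjTranspose, ← Matrix.mul_assoc, ← star_mul, Units.mul_inv, star_one,
    Matrix.one_mul, Units.mul_inv]

theorem PosDef.exists_congruence_diagonal_of_mul_inv_mul_comm {M K D : Matrix ι ι 𝕜}
    (hM : M.PosDef) (hK : K.IsHermitian) (hD : D.IsHermitian) (h : D * M⁻¹ * K = K * M⁻¹ * D) :
    ∃ Y : Matrix ι ι 𝕜, IsUnit Y ∧ ∃ μ δ : ι → 𝕜,
      Yᴴ * M * Y = 1 ∧ Yᴴ * K * Y = diagonal μ ∧ Yᴴ * D * Y = diagonal δ := by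
  obtain ⟨Y, hY, hMY⟩ := hM.exists_isUnit_conjTranspose_mul_mul_eq_one
  have hMinv : M⁻¹ = Y * Yᴴ :=
    inv_eq_left_inv (by rw [Matrix.mul_assoc]; exact mul_eq_one_comm.mp hMY)
  have hcomm : Commute (Yᴴ * K * Y) (Yᴴ * D * Y) :=
    calc Yᴴ * K * Y * (Yᴴ * D * Y) = Yᴴ * (K * M⁻¹ * D) * Y := by
          simp only [hMinv, Matrix.mul_assoc]
      _ = Yᴴ * (D * M⁻¹ * K) * Y := by rw [h]
      _ = Yᴴ * D * Y * (Yᴴ * K * Y) := by simp only [hMinv, Matrix.mul_assoc]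
  obtain ⟨U, hU, μ, δ, hKU, hDU⟩ :=
    (isHermitian_conjTranspose_mul_mul Y hK).exists_unitary_star_mul_mul_eq_diagonal_of_commute
      (isHermitian_conjTranspose_mul_mul Y hD) hcomm
  refine ⟨Y * U, hY.mul (Unitary.isUnit_coe (U := ⟨U, hU⟩)), μ, δ, ?_, ?_, ?_⟩
  all_goals rw [conjTranspose_mul_mul_same_mul, ← star_eq_conjTranspose]
  · rw [hMY, Matrix.mul_one, (mem_unitaryGroup_iff').mp hU]
  · exact hKU
  · exact hDU

end Matrix

open Matrix

/-- Modally damped systems can be simultaneously diagonalized: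
there is an invertible `X` with `Xᵀ M X = Ω⁻¹`, `Xᵀ K X = Ω`, `Xᵀ D X = 2Ξ`
for diagonal `Ω > 0` and diagonal `Ξ`. -/
theorem modal_damping_diagonalization {n : ℕ}
    (M D K : Matrix (Fin n) (Fin n) ℝ)
    (hM : M.PosDef) (hD : D.PosDef) (hK : K.PosDef)
    (hmodal : D * M⁻¹ * K = K * M⁻¹ * D) :
    ∃ (X : Matrix (Fin n) (Fin n) ℝ) (ω ξ : Fin n → ℝ),
      IsUnit X.det ∧ (∀ i, 0 < ω i) ∧
      Xᵀ * M * X = (Matrix.diagonal ω)⁻¹ ∧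
      Xᵀ * K * X = Matrix.diagonal ω ∧
      Xᵀ * D * X = (2 : ℝ) • Matrix.diagonal ξ := by
  obtain ⟨Y, hY, μ, δ, hMY, hKY, hDY⟩ :=
    hM.exists_congruence_diagonal_of_mul_inv_mul_comm hK.isHermitian hD.isHermitian hmodal
  have hμ : ∀ i, 0 < μ i := posDef_diagonal_iff.mp <|
    hKY ▸ hK.conjTranspose_mul_mul_same (mulVec_injective_iff_isUnit.mpr hY)
  set ω : Fin n → ℝ := fun i => √(μ i)
  have hω : ∀ i, 0 < ω i := fun i => Real.sqrt_pos.mpr (hμ i)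
  have hωω : ∀ i, ω i * ω i = μ i := fun i => Real.mul_self_sqrt (hμ i).le
  set s : Fin n → ℝ := fun i => (√(ω i))⁻¹
  have hs : ∀ i, s i ≠ 0 := fun i => inv_ne_zero (Real.sqrt_pos.mpr (hω i)).ne'
  have hss : ∀ i, s i * s i = (ω i)⁻¹ := fun i => by
    rw [← mul_inv, Real.mul_self_sqrt (hω i).le]
  have hscale : ∀ P : Matrix (Fin n) (Fin n) ℝ,
      (Y * diagonal s)ᵀ * P * (Y * diagonal s) = diagonal s * (Yᴴ * P * Y) * diagonal s := by
    intro P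
    rw [← conjTranspose_eq_transpose_of_trivial, conjTranspose_mul_mul_same_mul,
      diagonal_conjTranspose, star_trivial]
  refine ⟨Y * diagonal s, ω, fun i => s i * δ i * s i / 2,
    (isUnit_iff_isUnit_det _).mp (hY.mul ?_), hω, ?_, ?_, ?_⟩
  · exact isUnit_diagonal.mpr (Pi.isUnit_iff.mpr fun i => (hs i).isUnit)
  · rw [hscale, hMY, Matrix.mul_one, diagonal_mul_diagonal]
    refine (inv_eq_left_inv ?_).symm
    rw [diagonal_mul_diagonal, ← diagonal_one]
    exact congrArg diagonal (funext fun i => by rw [hss, inv_mul_cancel₀ (hω i).ne'])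
  · rw [hscale, hKY, diagonal_mul_diagonal, diagonal_mul_diagonal]
    exact congrArg diagonal (funext fun i => by
      rw [mul_right_comm, hss, ← hωω, inv_mul_cancel_left₀ (hω i).ne'])
  · rw [hscale, hDY, diagonal_mul_diagonal, diagonal_mul_diagonal, ← diagonal_smul]
    exact congrArg diagonal (funext fun i => by simp only [Pi.smul_apply, smul_eq_mul]; ring)
end

section
/- Let M = LLᵀ and K = GGᵀ be Cholesky factorizations of symmetric positive definite matrices, and let D be symmetric positive semi-definite. Define the block matrices 𝒜 = [[0, Gᵀ L⁻ᵀ], [−L⁻¹ G, −L⁻¹ D L⁻ᵀ]], ℬ = [0; L⁻¹ B], 𝒞 = [0, Bᵀ L⁻ᵀ], and 𝒮 = diag(−Iₙ, Iₙ). Then 𝒜𝒮 = 𝒮𝒜ᵀ and 𝒞 = ℬᵀ𝒮. -/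
open Matrix

/-! With `𝒮 = diag(-1, 1)`, right multiplication by `𝒮` negates the first block column and left
multiplication negates the first block row, so `𝒜𝒮 = 𝒮𝒜ᵀ` says exactly that the diagonal blocks
of `𝒜` are symmetric and its off-diagonal blocks are negative transposes of each other. For the
first-order form these are `0`, `-L⁻¹ D L⁻ᵀ` (symmetric because `D` is) and
`Gᵀ L⁻ᵀ = -(-(L⁻¹ G))ᵀ`; the output relation `𝒞 = ℬᵀ𝒮` holds because `𝒮` fixes the velocity
block, the only nonzero block of `ℬ`. -/

namespace Matrix

variable {m n p α : Type*} [Fintype m]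

theorem IsSymm.mul_mul_transpose [CommSemiring α] {A : Matrix m m α} (hA : A.IsSymm)
    (P : Matrix n m α) : (P * A * Pᵀ).IsSymm := by
  simp only [IsSymm, transpose_mul, transpose_transpose, hA.eq, Matrix.mul_assoc]

variable [Fintype n] [DecidableEq m] [DecidableEq n] [Ring α]

theorem fromBlocks_mul_signature_eq_signature_mul_transpose {A₁₁ : Matrix m m α}
    {A₁₂ : Matrix m n α} {A₂₁ : Matrix n m α} {A₂₂ : Matrix n n α}
    (h₁₁ : A₁₁.IsSymm) (h₂₁ : A₂₁ = -A₁₂ᵀ) (h₂₂ : A₂₂.IsSymm) :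
    fromBlocks A₁₁ A₁₂ A₂₁ A₂₂ * (fromBlocks (-1) 0 0 1 : Matrix (m ⊕ n) (m ⊕ n) α) =
      fromBlocks (-1) 0 0 1 * (fromBlocks A₁₁ A₁₂ A₂₁ A₂₂)ᵀ := by
  simp only [fromBlocks_transpose, fromBlocks_multiply, h₁₁.eq, h₂₂.eq, h₂₁, transpose_neg,
    transpose_transpose, Matrix.mul_one, Matrix.one_mul, Matrix.mul_zero, Matrix.zero_mul,
    Matrix.mul_neg, Matrix.neg_mul, neg_neg, neg_zero, add_zero, zero_add]

theorem transpose_fromRows_mul_signature (B₁ : Matrix m p α) (B₂ : Matrix n p α) :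
    (fromRows B₁ B₂)ᵀ * (fromBlocks (-1) 0 0 1 : Matrix (m ⊕ n) (m ⊕ n) α) =
      fromCols (-B₁ᵀ) B₂ᵀ := by
  simp only [transpose_fromRows, fromCols_mul_fromBlocks, Matrix.mul_neg, Matrix.mul_one,
    Matrix.mul_zero, add_zero, zero_add]

end Matrix

theorem first_order_symmetry_structure_general {n m : ℕ}
    (D : Matrix (Fin n) (Fin n) ℝ)
    (L G : Matrix (Fin n) (Fin n) ℝ) (B : Matrix (Fin n) (Fin m) ℝ)
    (hD : D.PosSemidef) :
    let A : Matrix (Fin n ⊕ Fin n) (Fin n ⊕ Fin n) ℝ :=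
      Matrix.fromBlocks 0 (Gᵀ * (L⁻¹)ᵀ) (-(L⁻¹ * G)) (-(L⁻¹ * D * (L⁻¹)ᵀ))
    let S : Matrix (Fin n ⊕ Fin n) (Fin n ⊕ Fin n) ℝ :=
      Matrix.fromBlocks (-1) 0 0 1
    let Bc : Matrix (Fin n ⊕ Fin n) (Fin m) ℝ :=
      Matrix.of fun i j => Sum.elim (fun _ => (0 : ℝ)) (fun i' => (L⁻¹ * B) i' j) i
    let Cc : Matrix (Fin m) (Fin n ⊕ Fin n) ℝ :=
      Matrix.of fun i j => Sum.elim (fun _ => (0 : ℝ)) (fun j' => (Bᵀ * (L⁻¹)ᵀ) i j') j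
    A * S = S * Aᵀ ∧ Cc = Bcᵀ * S := by
  intro A S Bc Cc
  have hDsymm : D.IsSymm := isHermitian_iff_isSymm.mp hD.isHermitian
  have hBc : Bc = fromRows 0 (L⁻¹ * B) := by ext (i | i) j <;> rfl
  have hCc : Cc = fromCols 0 (Bᵀ * (L⁻¹)ᵀ) := by ext i (j | j) <;> rfl
  refine ⟨fromBlocks_mul_signature_eq_signature_mul_transpose isSymm_zero ?_
    (hDsymm.mul_mul_transpose L⁻¹).neg, ?_⟩
  · rw [transpose_mul, transpose_transpose, transpose_transpose]
  · have h := transpose_fromRows_mul_signature (0 : Matrix (Fin n) (Fin m) ℝ) (L⁻¹ * B)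
    rw [transpose_zero, neg_zero, transpose_mul] at h
    rw [hBc, hCc]
    exact h.symm

/-- The first-order form of a second-order system with co-located velocity
outputs has the internal symmetry structure `𝒜𝒮 = 𝒮𝒜ᵀ` and `𝒞 = ℬᵀ𝒮`,
where `𝒮 = diag(−Iₙ, Iₙ)`. -/
theorem first_order_symmetry_structure {n m : ℕ}
    (M D K : Matrix (Fin n) (Fin n) ℝ)
    (L G : Matrix (Fin n) (Fin n) ℝ) (B : Matrix (Fin n) (Fin m) ℝ)
    (hM : M.PosDef) (hK : K.PosDef) (hD : D.PosSemidef)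
    (hL : IsUnit L.det) (hG : IsUnit G.det)
    (hMfac : M = L * Lᵀ) (hKfac : K = G * Gᵀ) :
    let A : Matrix (Fin n ⊕ Fin n) (Fin n ⊕ Fin n) ℝ :=
      Matrix.fromBlocks 0 (Gᵀ * (L⁻¹)ᵀ) (-(L⁻¹ * G)) (-(L⁻¹ * D * (L⁻¹)ᵀ))
    let S : Matrix (Fin n ⊕ Fin n) (Fin n ⊕ Fin n) ℝ :=
      Matrix.fromBlocks (-1) 0 0 1
    let Bc : Matrix (Fin n ⊕ Fin n) (Fin m) ℝ :=
      Matrix.of fun i j => Sum.elim (fun _ => (0 : ℝ)) (fun i' => (L⁻¹ * B) i' j) i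
    let Cc : Matrix (Fin m) (Fin n ⊕ Fin n) ℝ :=
      Matrix.of fun i j => Sum.elim (fun _ => (0 : ℝ)) (fun j' => (Bᵀ * (L⁻¹)ᵀ) i j') j
    A * S = S * Aᵀ ∧ Cc = Bcᵀ * S :=
  first_order_symmetry_structure_general D L G B hD
end

section
/- If a second-order system with M, D, K symmetric positive definite is overdamped, i.e., (vᵀDv)² > 4(vᵀMv)(vᵀKv) for all nonzero v ∈ ℝⁿ, then every eigenvalue λ ∈ ℂ of the quadratic pencil λ²M + λD + K is real and negative. -/
/-!
Write `λ = σ + iτ` and `x = u + iw`. Splitting `(λ²M + λD + K)x = 0` into real and imaginary parts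
gives `Au = τBw` and `Aw = -τBu` with `A = (σ² - τ²)M + σD + K` and `B = 2σM + D`, and for `τ ≠ 0`
the symmetry of `A` and `B` then forces `uᵀAu + wᵀAw = 0` and `uᵀBu + wᵀBw = 0`. Replacing
`(u, w)` by `(u + tw, tu - w)` for a root `t` of a quadratic produces two vectors, not both zero, on
which `B` vanishes and whose `A`-values still sum to zero. But for `v ≠ 0` the condition `vᵀBv = 0` says that `σ` is the vertex of the real quadratic
`z ↦ z² vᵀMv + z vᵀDv + vᵀKv`, which by overdamping is negative there, so `vᵀAv < 0`. Hence
`τ = 0`, and then `σ²vᵀMv + σvᵀDv + vᵀKv = 0` for a nonzero real `v` forces `σ < 0`.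
-/

open Matrix

variable {n : Type*} [Fintype n]

theorem re_mulVec_map_ofReal (A : Matrix n n ℝ) (x : n → ℂ) (i : n) :
    ((A.map Complex.ofReal *ᵥ x) i).re = (A *ᵥ (Complex.re ∘ x)) i := by
  simp [mulVec, dotProduct, Complex.re_sum]

theorem im_mulVec_map_ofReal (A : Matrix n n ℝ) (x : n → ℂ) (i : n) :
    ((A.map Complex.ofReal *ᵥ x) i).im = (A *ᵥ (Complex.im ∘ x)) i := by
  simp [mulVec, dotProduct, Complex.im_sum]

theorem mulVec_re_im_of_pencil_mulVec_eq_zero {M D K : Matrix n n ℝ} {lam : ℂ} {x : n → ℂ}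
    (h : (lam ^ 2 • M.map Complex.ofReal + lam • D.map Complex.ofReal
      + K.map Complex.ofReal) *ᵥ x = 0) :
    ((lam.re ^ 2 - lam.im ^ 2) • M + lam.re • D + K) *ᵥ (Complex.re ∘ x)
        = lam.im • ((2 * lam.re) • M + D) *ᵥ (Complex.im ∘ x) ∧
      ((lam.re ^ 2 - lam.im ^ 2) • M + lam.re • D + K) *ᵥ (Complex.im ∘ x)
        = -lam.im • ((2 * lam.re) • M + D) *ᵥ (Complex.re ∘ x) := by
  have hi (i : n) := congrFun h i
  simp only [add_mulVec, smul_mulVec, Pi.add_apply, Pi.smul_apply, smul_eq_mul, Pi.zero_apply,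
    Complex.ext_iff, Complex.add_re, Complex.add_im, Complex.mul_re, Complex.mul_im, sq,
    re_mulVec_map_ofReal, im_mulVec_map_ofReal, Complex.zero_re, Complex.zero_im] at hi
  constructor <;> funext i <;>
    simp only [add_mulVec, smul_mulVec, Pi.add_apply, Pi.smul_apply, smul_eq_mul]
  · linear_combination (hi i).1
  · linear_combination (hi i).2

theorem Matrix.IsSymm.dotProduct_mulVec_comm {R : Type*} [CommSemiring R] {A : Matrix n n R}
    (hA : A.IsSymm) (v w : n → R) : v ⬝ᵥ A *ᵥ w = w ⬝ᵥ A *ᵥ v := by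
  rw [dotProduct_mulVec, dotProduct_comm, ← vecMul_transpose, hA.eq]

theorem dotProduct_mulVec_add_smul_add_dotProduct_mulVec_smul_sub {R : Type*} [CommRing R]
    (A : Matrix n n R) (u w : n → R) (t : R) :
    (u + t • w) ⬝ᵥ A *ᵥ (u + t • w) + (t • u - w) ⬝ᵥ A *ᵥ (t • u - w)
      = (1 + t ^ 2) * (u ⬝ᵥ A *ᵥ u + w ⬝ᵥ A *ᵥ w) := by
  simp only [mulVec_add, mulVec_sub, mulVec_smul, add_dotProduct, sub_dotProduct, dotProduct_add,
    dotProduct_sub, smul_dotProduct, dotProduct_smul, smul_eq_mul]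
  ring

theorem exists_add_mul_sub_sq_mul_eq_zero (a c : ℝ) : ∃ t : ℝ, a + t * c - t ^ 2 * a = 0 := by
  rcases eq_or_ne a 0 with rfl | ha
  · exact ⟨0, by ring⟩
  obtain ⟨t, ht⟩ := exists_quadratic_eq_zero (b := c) (c := a) (neg_ne_zero.2 ha)
    ⟨√(c ^ 2 + 4 * a ^ 2), by rw [discrim, ← sq, Real.sq_sqrt (by positivity)]; ring⟩
  exact ⟨t, by linear_combination ht⟩

theorem dotProduct_mulVec_add_eq_zero_of_mulVec_eq {R : Type*} [CommRing R] [NoZeroDivisors R]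
    {A B : Matrix n n R} (hA : A.IsSymm) (hB : B.IsSymm) {τ : R} (hτ : τ ≠ 0) {u w : n → R}
    (hu : A *ᵥ u = τ • B *ᵥ w) (hw : A *ᵥ w = -τ • B *ᵥ u) :
    u ⬝ᵥ A *ᵥ u + w ⬝ᵥ A *ᵥ w = 0 ∧ u ⬝ᵥ B *ᵥ u + w ⬝ᵥ B *ᵥ w = 0 := by
  constructor
  · rw [hu, hw, dotProduct_smul, dotProduct_smul, hB.dotProduct_mulVec_comm w, smul_eq_mul,
      smul_eq_mul]
    ring
  · have h : τ * (u ⬝ᵥ B *ᵥ u + w ⬝ᵥ B *ᵥ w) = 0 := by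
      have := hA.dotProduct_mulVec_comm u w
      rw [hu, hw, dotProduct_smul, dotProduct_smul, smul_eq_mul, smul_eq_mul] at this
      linear_combination -this
    exact (mul_eq_zero.1 h).resolve_left hτ

theorem false_of_dotProduct_mulVec_neg_of_isotropic {A B : Matrix n n ℝ}
    (hneg : ∀ v, v ≠ 0 → v ⬝ᵥ B *ᵥ v = 0 → v ⬝ᵥ A *ᵥ v < 0) {u w : n → ℝ} (huw : u ≠ 0 ∨ w ≠ 0)
    (hA : u ⬝ᵥ A *ᵥ u + w ⬝ᵥ A *ᵥ w = 0) (hB : u ⬝ᵥ B *ᵥ u + w ⬝ᵥ B *ᵥ w = 0) : False := by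
  obtain ⟨t, ht⟩ := exists_add_mul_sub_sq_mul_eq_zero (u ⬝ᵥ B *ᵥ u) (u ⬝ᵥ B *ᵥ w + w ⬝ᵥ B *ᵥ u)
  have hB₁ : (u + t • w) ⬝ᵥ B *ᵥ (u + t • w) = 0 := by
    simp only [mulVec_add, mulVec_smul, add_dotProduct, dotProduct_add, smul_dotProduct,
      dotProduct_smul, smul_eq_mul]
    linear_combination ht + t ^ 2 * hB
  have hB₂ : (t • u - w) ⬝ᵥ B *ᵥ (t • u - w) = 0 := by
    linear_combination (1 + t ^ 2) * hB - hB₁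
      + dotProduct_mulVec_add_smul_add_dotProduct_mulVec_smul_sub B u w t
  have hA₁₂ := dotProduct_mulVec_add_smul_add_dotProduct_mulVec_smul_sub A u w t
  have hle : ∀ v, v ⬝ᵥ B *ᵥ v = 0 → v ⬝ᵥ A *ᵥ v ≤ 0 := fun v hv => by
    rcases eq_or_ne v 0 with rfl | hv₀
    · simp
    · exact (hneg v hv₀ hv).le
  have hne : u + t • w ≠ 0 ∨ t • u - w ≠ 0 := by
    by_contra! h
    obtain ⟨h₁, h₂⟩ := h
    have hw : w = t • u := (sub_eq_zero.1 h₂).symm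
    have hu' : (1 + t ^ 2) • u = 0 := by rw [← h₁, hw, smul_smul]; module
    have hu : u = 0 := (smul_eq_zero.1 hu').resolve_left (by positivity)
    exact huw.elim (· hu) (· (by rw [hw, hu, smul_zero]))
  rw [hA, mul_zero] at hA₁₂
  rcases hne with h | h
  · linarith [hneg _ h hB₁, hle _ hB₂]
  · linarith [hneg _ h hB₂, hle _ hB₁]

def Overdamped (M D K : Matrix n n ℝ) : Prop :=
  ∀ v : n → ℝ, v ≠ 0 → 4 * (v ⬝ᵥ M *ᵥ v) * (v ⬝ᵥ K *ᵥ v) < (v ⬝ᵥ D *ᵥ v) ^ 2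

theorem Overdamped.dotProduct_mulVec_neg_of_isotropic {M D K : Matrix n n ℝ}
    (hover : Overdamped M D K) (hM : M.PosDef) (σ τ : ℝ) {v : n → ℝ} (hv : v ≠ 0)
    (hB : v ⬝ᵥ ((2 * σ) • M + D) *ᵥ v = 0) :
    v ⬝ᵥ ((σ ^ 2 - τ ^ 2) • M + σ • D + K) *ᵥ v < 0 := by
  have hm : 0 < v ⬝ᵥ M *ᵥ v := by simpa using hM.dotProduct_mulVec_pos hv
  have hdisc := hover v hv
  simp only [add_mulVec, smul_mulVec, dotProduct_add, dotProduct_smul, smul_eq_mul] at hB ⊢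
  have hk : v ⬝ᵥ K *ᵥ v < σ ^ 2 * (v ⬝ᵥ M *ᵥ v) := by
    rw [show v ⬝ᵥ D *ᵥ v = -(2 * σ * (v ⬝ᵥ M *ᵥ v)) by linarith] at hdisc
    nlinarith
  nlinarith [mul_nonneg (sq_nonneg τ) hm.le]

theorem neg_of_pencil_mulVec_eq_zero {M D K : Matrix n n ℝ} (hM : M.PosSemidef) (hD : D.PosSemidef)
    (hK : K.PosDef) {σ : ℝ} {v : n → ℝ} (hv : v ≠ 0) (h : (σ ^ 2 • M + σ • D + K) *ᵥ v = 0) :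
    σ < 0 := by
  have hv' := congrArg (v ⬝ᵥ ·) h
  simp only [add_mulVec, smul_mulVec, dotProduct_add, dotProduct_smul, smul_eq_mul,
    dotProduct_zero] at hv'
  have hm : 0 ≤ v ⬝ᵥ M *ᵥ v := by simpa using hM.dotProduct_mulVec_nonneg v
  have hd : 0 ≤ v ⬝ᵥ D *ᵥ v := by simpa using hD.dotProduct_mulVec_nonneg v
  have hk : 0 < v ⬝ᵥ K *ᵥ v := by simpa using hK.dotProduct_mulVec_pos hv
  by_contra! hσ
  nlinarith [mul_nonneg (sq_nonneg σ) hm, mul_nonneg hσ hd]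

/-- For an overdamped second-order system, every eigenvalue of the quadratic
pencil `λ²M + λD + K` is real and negative. -/
theorem overdamped_eigenvalues_real_negative {n : ℕ}
    (M D K : Matrix (Fin n) (Fin n) ℝ)
    (hM : M.PosDef) (hD : D.PosDef) (hK : K.PosDef)
    (hover : ∀ v : Fin n → ℝ, v ≠ 0 →
      4 * (v ⬝ᵥ M.mulVec v) * (v ⬝ᵥ K.mulVec v) < (v ⬝ᵥ D.mulVec v) ^ 2)
    (lam : ℂ) (x : Fin n → ℂ) (hx : x ≠ 0)
    (heig : (lam ^ 2 • M.map (Complex.ofReal) + lam • D.map (Complex.ofReal)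
        + K.map (Complex.ofReal)).mulVec x = 0) :
    lam.im = 0 ∧ lam.re < 0 := by
  obtain ⟨hre, him⟩ := mulVec_re_im_of_pencil_mulVec_eq_zero heig
  have hx' : Complex.re ∘ x ≠ 0 ∨ Complex.im ∘ x ≠ 0 := by
    by_contra! h
    exact hx (funext fun i => Complex.ext (congrFun h.1 i) (congrFun h.2 i))
  have hsymm {A : Matrix (Fin n) (Fin n) ℝ} (hA : A.PosDef) : A.IsSymm :=
    isHermitian_iff_isSymm.1 hA.isHermitian
  have him_eq : lam.im = 0 := by
    by_contra hτ
    obtain ⟨hA, hB⟩ := dotProduct_mulVec_add_eq_zero_of_mulVec_eq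
      (((hsymm hM).smul _).add ((hsymm hD).smul _) |>.add (hsymm hK))
      (((hsymm hM).smul _).add (hsymm hD)) hτ hre him
    exact false_of_dotProduct_mulVec_neg_of_isotropic
      (fun v hv => Overdamped.dotProduct_mulVec_neg_of_isotropic hover hM _ _ hv) hx' hA hB
  refine ⟨him_eq, ?_⟩
  rcases hx' with h | h
  · exact neg_of_pencil_mulVec_eq_zero hM.posSemidef hD.posSemidef hK h (by simpa [him_eq] using hre)
  · exact neg_of_pencil_mulVec_eq_zero hM.posSemidef hD.posSemidef hK h (by simpa [him_eq] using him)
end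

section
/- If M, D, K are symmetric positive definite and the system is modally damped (D M⁻¹ K = K M⁻¹ D), then M⁻¹D and M⁻¹K commute, and M⁻¹D, M⁻¹K are simultaneously diagonalizable by a basis that is M-orthogonal. -/
/-!
With `S = √M`, the matrices `M⁻¹D` and `M⁻¹K` are similar, via `S`, to the Hermitian matrices
`S⁻¹DS⁻¹` and `S⁻¹KS⁻¹`, and modal damping says exactly that these two commute. Commuting
Hermitian matrices have a common orthonormal eigenbasis (the joint eigenspaces are orthogonal and
span the space); its image under `S⁻¹` is an `M`-orthonormal common eigenbasis of `M⁻¹D`, `M⁻¹K`.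
-/

open Matrix

open Module.End in
theorem LinearMap.IsSymmetric.exists_orthonormalBasis_eigenvectors_of_commute_s13
    {𝕜 E : Type*} [RCLike 𝕜] [NormedAddCommGroup E] [InnerProductSpace 𝕜 E]
    [FiniteDimensional 𝕜 E] {n : ℕ} (hn : Module.finrank 𝕜 E = n) {A B : E →ₗ[𝕜] E}
    (hA : A.IsSymmetric) (hB : B.IsSymmetric) (hAB : Commute A B) :
    ∃ (b : OrthonormalBasis (Fin n) 𝕜 E) (d e : Fin n → 𝕜),
      ∀ i, A (b i) = d i • b i ∧ B (b i) = e i • b i := by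
  classical
  let V : 𝕜 × 𝕜 → Submodule 𝕜 E := fun μ ↦ eigenspace A μ.2 ⊓ eigenspace B μ.1
  have hV : DirectSum.IsInternal V := hA.directSum_isInternal_of_commute hB hAB
  -- `subordinateOrthonormalBasis` needs a finite index set: keep the nonzero joint eigenspaces
  let _ : Fintype {μ // V μ ≠ ⊥} := hV.submodule_iSupIndep.fintypeNeBotOfFiniteDimensional
  have hV' : DirectSum.IsInternal fun μ : {μ // V μ ≠ ⊥} ↦ V μ :=
    DirectSum.isInternal_ne_bot_iff.mpr hV
  have hVorth : OrthogonalFamily 𝕜 (fun μ : {μ // V μ ≠ ⊥} ↦ V μ) fun μ ↦ (V μ).subtypeₗᵢ :=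
    (hA.orthogonalFamily_eigenspace_inf_eigenspace hB).comp Subtype.val_injective
  let μ : Fin n → 𝕜 × 𝕜 := fun i ↦ (hV'.subordinateOrthonormalBasisIndex hn i hVorth).val
  refine ⟨hV'.subordinateOrthonormalBasis hn hVorth, fun i ↦ (μ i).2, fun i ↦ (μ i).1,
    fun i ↦ ?_⟩
  have hmem := hV'.subordinateOrthonormalBasis_subordinate hn i hVorth
  exact ⟨mem_eigenspace_iff.mp hmem.1, mem_eigenspace_iff.mp hmem.2⟩

theorem Matrix.mul_eq_mul_diagonal_of_mulVec_eq {ι α : Type*} [Fintype ι] [DecidableEq ι]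
    [CommSemiring α] {A U : Matrix ι ι α} {d : ι → α}
    (h : ∀ j, A *ᵥ Uᵀ j = d j • Uᵀ j) : A * U = U * diagonal d := by
  ext i j
  rw [mul_diagonal]
  simpa [mul_apply, mulVec, dotProduct, mul_comm] using congrFun (h j) i

section

open scoped ComplexOrder

variable {𝕜 ι : Type*} [RCLike 𝕜] [Fintype ι] [DecidableEq ι]

theorem Matrix.IsHermitian.exists_unitary_mul_diagonal_of_commute {A B : Matrix ι ι 𝕜}
    (hA : A.IsHermitian) (hB : B.IsHermitian) (hAB : Commute A B) :
    ∃ U ∈ unitaryGroup ι 𝕜, ∃ d e : ι → 𝕜,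
      A * U = U * diagonal d ∧ B * U = U * diagonal e := by
  obtain ⟨b, d, e, hb⟩ :=
    (isSymmetric_toEuclideanLin_iff.mpr hA).exists_orthonormalBasis_eigenvectors_of_commute_s13
      finrank_euclideanSpace (isSymmetric_toEuclideanLin_iff.mpr hB)
      (hAB.map (toLpLinAlgEquiv 2))
  let σ := Fintype.equivFin ι
  let b' := b.reindex σ.symm
  let U := (EuclideanSpace.basisFun ι 𝕜).toBasis.toMatrix b'.toBasis
  have hU : ∀ j, Uᵀ j = b (σ j) := fun j ↦ by
    ext i
    simp [U, b', Module.Basis.toMatrix_apply]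
  refine ⟨U, (EuclideanSpace.basisFun ι 𝕜).toMatrix_orthonormalBasis_mem_unitary b',
    d ∘ σ, e ∘ σ, mul_eq_mul_diagonal_of_mulVec_eq fun j ↦ ?_,
    mul_eq_mul_diagonal_of_mulVec_eq fun j ↦ ?_⟩
  · simpa [hU] using congr(WithLp.ofLp $((hb (σ j)).1))
  · simpa [hU] using congr(WithLp.ofLp $((hb (σ j)).2))

open scoped MatrixOrder in
theorem Matrix.PosDef.exists_isHermitian_isUnit_mul_self_eq {M : Matrix ι ι 𝕜}
    (hM : M.PosDef) : ∃ S : Matrix ι ι 𝕜, S.IsHermitian ∧ IsUnit S ∧ S * S = M := by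
  have hS : CFC.sqrt M * CFC.sqrt M = M := CFC.sqrt_mul_sqrt_self M hM.posSemidef.nonneg
  exact ⟨CFC.sqrt M, (CFC.sqrt_nonneg M).posSemidef.isHermitian,
    isUnit_of_mul_isUnit_left (hS.symm ▸ hM.isUnit), hS⟩

theorem Matrix.PosDef.exists_orthonormal_common_eigenbasis_inv_mul
    {M D K : Matrix ι ι 𝕜} (hM : M.PosDef) (hD : D.IsHermitian) (hK : K.IsHermitian)
    (hDK : D * M⁻¹ * K = K * M⁻¹ * D) :
    ∃ (X : Matrix ι ι 𝕜) (d e : ι → 𝕜), Xᴴ * M * X = 1 ∧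
      M⁻¹ * D * X = X * diagonal d ∧ M⁻¹ * K * X = X * diagonal e := by
  obtain ⟨S, hS, hSunit, rfl⟩ := hM.exists_isHermitian_isUnit_mul_self_eq
  have hSdet : IsUnit S.det := (isUnit_iff_isUnit_det S).mp hSunit
  have hSinv : (S⁻¹)ᴴ = S⁻¹ := hS.inv
  have hinv : (S * S)⁻¹ = S⁻¹ * S⁻¹ := Matrix.mul_inv_rev S S
  have hcomm : Commute (S⁻¹ * D * S⁻¹) (S⁻¹ * K * S⁻¹) := by
    simp only [Commute, SemiconjBy, Matrix.mul_assoc]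
    simpa only [hinv, Matrix.mul_assoc] using congr(S⁻¹ * $hDK * S⁻¹)
  obtain ⟨U, hU, d, e, hdU, heU⟩ := IsHermitian.exists_unitary_mul_diagonal_of_commute
    (by simpa only [hSinv] using isHermitian_conjTranspose_mul_mul S⁻¹ hD)
    (by simpa only [hSinv] using isHermitian_conjTranspose_mul_mul S⁻¹ hK) hcomm
  refine ⟨S⁻¹ * U, d, e, ?_, ?_, ?_⟩
  · calc (S⁻¹ * U)ᴴ * (S * S) * (S⁻¹ * U)
        = star U * ((S⁻¹ * S) * (S * S⁻¹)) * U := by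
          simp only [conjTranspose_mul, hSinv, star_eq_conjTranspose, Matrix.mul_assoc]
      _ = 1 := by
          rw [nonsing_inv_mul S hSdet, mul_nonsing_inv S hSdet, Matrix.mul_one, Matrix.mul_one,
            mem_unitaryGroup_iff'.mp hU]
  · simp only [hinv, Matrix.mul_assoc] at hdU ⊢
    rw [hdU]
  · simp only [hinv, Matrix.mul_assoc] at heU ⊢
    rw [heU]

end

/-- Under modal damping `D M⁻¹ K = K M⁻¹ D`, the matrices `M⁻¹D` and `M⁻¹K`
commute and are simultaneously diagonalizable by an `M`-orthogonal basis. -/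
theorem modal_damping_commute_simultaneously_diagonalizable {n : ℕ}
    (M D K : Matrix (Fin n) (Fin n) ℝ)
    (hM : M.PosDef) (hD : D.PosDef) (hK : K.PosDef)
    (hmodal : D * M⁻¹ * K = K * M⁻¹ * D) :
    (M⁻¹ * D) * (M⁻¹ * K) = (M⁻¹ * K) * (M⁻¹ * D) ∧
    ∃ (X : Matrix (Fin n) (Fin n) ℝ) (d e : Fin n → ℝ),
      IsUnit X.det ∧
      (M⁻¹ * D) * X = X * Matrix.diagonal d ∧
      (M⁻¹ * K) * X = X * Matrix.diagonal e ∧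
      (∀ i j, i ≠ j → (Xᵀ * M * X) i j = 0) := by
  refine ⟨by simpa only [Matrix.mul_assoc] using congr(M⁻¹ * $hmodal), ?_⟩
  obtain ⟨X, d, e, hXM, hdX, heX⟩ :=
    hM.exists_orthonormal_common_eigenbasis_inv_mul hD.isHermitian hK.isHermitian hmodal
  rw [conjTranspose_eq_transpose_of_trivial] at hXM
  exact ⟨X, d, e, isUnit_det_of_left_inverse hXM, hdX, heX,
    fun i j hij ↦ hXM ▸ one_apply_ne hij⟩
end

section
/- Let V ∈ ℂ^{n×r} have full column rank and contain the column v(σ) := (σ²M + σD + K)⁻¹B b for some point σ ∈ ℂ and direction b ∈ ℂᵐ. Define the reduced matrices M̂ = VᴴMV, D̂ = VᴴDV, K̂ = VᴴKV, B̂ = VᴴB and reduced transfer function Ĥ(s) = B̂ᴴ(s²M̂ + sD̂ + K̂)⁻¹B̂ with H(s) = Bᴴ(s²M + sD + K)⁻¹B. Then tangential interpolation holds: H(σ)b = Ĥ(σ)b, provided σ²M̂ + σD̂ + K̂ is invertible. -/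
open Matrix

/-! If `V c = A⁻¹ B b`, then the projected system `(W A V) ĉ = W B b` is solved by `ĉ = c`,
so the reduced model reproduces the full state `A⁻¹ B b = V c` and hence every output
`C A⁻¹ B b = (C V) c`. Take `A = σ²M + σD + K`, `W = Vᴴ` and `C = Bᴴ`. -/

namespace Matrix

variable {R : Type*} [CommRing R] {l n p q : Type*}

theorem nonsing_inv_mulVec_eq_of_mulVec_eq [Fintype n] [DecidableEq n] {A : Matrix n n R}
    {x y : n → R} (hA : IsUnit A.det) (h : A *ᵥ x = y) : A⁻¹ *ᵥ y = x := by
  rw [← h, mulVec_mulVec, nonsing_inv_mul _ hA, one_mulVec]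

theorem smul_add_smul_add_mul_mul [Fintype n] (W : Matrix l n R) (M D K : Matrix n n R)
    (V : Matrix n p R) (s t : R) :
    s • (W * M * V) + t • (W * D * V) + W * K * V = W * (s • M + t • D + K) * V := by
  simp only [Matrix.mul_add, Matrix.add_mul, Matrix.mul_smul, Matrix.smul_mul]

theorem projected_mulVec_eq_of_mulVec_eq_inv_mulVec
    [Fintype n] [DecidableEq n] [Fintype p] [Fintype q] {A : Matrix n n R}
    {W : Matrix p n R} {V : Matrix n p R} {B : Matrix n q R} {b : q → R} {c : p → R}
    (hA : IsUnit A.det) (hc : V *ᵥ c = A⁻¹ *ᵥ (B *ᵥ b)) :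
    (W * A * V) *ᵥ c = (W * B) *ᵥ b := by
  rw [Matrix.mul_assoc, ← mulVec_mulVec, ← mulVec_mulVec, hc, mulVec_mulVec _ A,
    mul_nonsing_inv _ hA, one_mulVec, mulVec_mulVec]

theorem mul_nonsing_inv_mul_mulVec_eq_projected
    [Fintype n] [DecidableEq n] [Fintype p] [DecidableEq p] [Fintype q] {A : Matrix n n R}
    (C : Matrix l n R) (W : Matrix p n R) (V : Matrix n p R) (B : Matrix n q R)
    {b : q → R} (hA : IsUnit A.det) (hAV : IsUnit (W * A * V).det)
    (hrange : ∃ c, V *ᵥ c = A⁻¹ *ᵥ (B *ᵥ b)) :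
    (C * A⁻¹ * B) *ᵥ b = (C * V * (W * A * V)⁻¹ * (W * B)) *ᵥ b := by
  obtain ⟨c, hc⟩ := hrange
  have hproj : (W * A * V)⁻¹ *ᵥ ((W * B) *ᵥ b) = c :=
    nonsing_inv_mulVec_eq_of_mulVec_eq hAV (projected_mulVec_eq_of_mulVec_eq_inv_mulVec hA hc)
  rw [← mulVec_mulVec, ← mulVec_mulVec, ← hc, ← hproj]
  simp only [mulVec_mulVec, Matrix.mul_assoc]

end Matrix

theorem galerkin_tangential_interpolation_general {n r m : ℕ}
    (M D K : Matrix (Fin n) (Fin n) ℂ) (B : Matrix (Fin n) (Fin m) ℂ)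
    (V : Matrix (Fin n) (Fin r) ℂ)
    (σ : ℂ) (b : Fin m → ℂ)
    (hfull : IsUnit (σ ^ 2 • M + σ • D + K).det)
    (hred : IsUnit (σ ^ 2 • (Vᴴ * M * V) + σ • (Vᴴ * D * V) + Vᴴ * K * V).det)
    (hrange : ∃ c : Fin r → ℂ,
      V.mulVec c = (σ ^ 2 • M + σ • D + K)⁻¹.mulVec (B.mulVec b)) :
    (Bᴴ * (σ ^ 2 • M + σ • D + K)⁻¹ * B).mulVec b
      = ((Vᴴ * B)ᴴ *
          (σ ^ 2 • (Vᴴ * M * V) + σ • (Vᴴ * D * V) + Vᴴ * K * V)⁻¹ *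
          (Vᴴ * B)).mulVec b := by
  rw [smul_add_smul_add_mul_mul] at hred ⊢
  rw [conjTranspose_mul, conjTranspose_conjTranspose]
  exact mul_nonsing_inv_mul_mulVec_eq_projected Bᴴ Vᴴ V B hfull hred hrange

/-- Tangential interpolation by Galerkin projection: if
`(σ²M + σD + K)⁻¹ B b ∈ range(V)` for a full-column-rank `V`, then the reduced
transfer function obtained by projection with `V` matches the full one
tangentially at `σ`: `H(σ)b = Ĥ(σ)b`. -/
theorem galerkin_tangential_interpolation {n r m : ℕ}
    (M D K : Matrix (Fin n) (Fin n) ℂ) (B : Matrix (Fin n) (Fin m) ℂ)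
    (V : Matrix (Fin n) (Fin r) ℂ) (hV : V.rank = r)
    (σ : ℂ) (b : Fin m → ℂ)
    (hfull : IsUnit (σ ^ 2 • M + σ • D + K).det)
    (hred : IsUnit (σ ^ 2 • (Vᴴ * M * V) + σ • (Vᴴ * D * V) + Vᴴ * K * V).det)
    (hrange : ∃ c : Fin r → ℂ,
      V.mulVec c = (σ ^ 2 • M + σ • D + K)⁻¹.mulVec (B.mulVec b)) :
    (Bᴴ * (σ ^ 2 • M + σ • D + K)⁻¹ * B).mulVec b
      = ((Vᴴ * B)ᴴ *
          (σ ^ 2 • (Vᴴ * M * V) + σ • (Vᴴ * D * V) + Vᴴ * K * V)⁻¹ *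
          (Vᴴ * B)).mulVec b :=
  galerkin_tangential_interpolation_general M D K B V σ b hfull hred hrange
end
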